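/- arXiv:1911.04078 — 4 statements merged into one kernel-verified Lean document; each statement's English description precedes it below -/
import Mathlib

section
/- Let C_ro and C_up be positive real numbers and let K be a positive natural number with C_up ≤ K · C_ro. Define online(r) = r · C_ro if r < K and online(r) = K · C_ro + C_up if r ≥ K, and define offline(r) = min(r · C_ro, C_up), for every natural number r. Then for every natural number r, online(r) ≤ (1 + K · C_ro / C_up) · offline(r); that is, the memoryless replication algorithm with threshold K is (1 + K · C_ro / C_up)-competitive in Gas cost. -/
/-!
Scale the offline cost `min (r * C_ro) C_up` by `ρ = 1 + K * C_ro / C_up`: it becomes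
`min (ρ * r * C_ro) (K * C_ro + C_up)`, so it suffices to bound the online cost by each term.
The online cost never exceeds `K * C_ro + C_up`, the price of `K` off-chain reads plus one
replication. It is also at most `ρ * r * C_ro`: below the threshold trivially since `ρ ≥ 1`, and
from the threshold on because `C_up ≤ K * C_ro ≤ r * C_ro` makes `K * C_ro / C_up ≥ 1`.
-/

namespace MemorylessReplication

variable (c u : ℝ) (K : ℕ)

def onlineCost (r : ℕ) : ℝ := if r < K then r * c else K * c + u

def offlineCost (r : ℕ) : ℝ := min (r * c) u

variable {c u K}

theorem onlineCost_le_add (hc : 0 ≤ c) (hu : 0 ≤ u) (r : ℕ) :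
    onlineCost c u K r ≤ K * c + u := by
  unfold onlineCost
  split_ifs with hr
  · have : (r : ℝ) * c ≤ K * c := mul_le_mul_of_nonneg_right (by exact_mod_cast hr.le) hc
    linarith
  · exact le_rfl

theorem onlineCost_le_mul (hc : 0 ≤ c) (hu : 0 < u) (hKc : u ≤ K * c) (r : ℕ) :
    onlineCost c u K r ≤ (1 + K * c / u) * (r * c) := by
  have hratio : 1 ≤ K * c / u := (one_le_div hu).mpr hKc
  unfold onlineCost
  split_ifs with hr
  · exact le_mul_of_one_le_left (by positivity) (by linarith)
  · have hKr : (K : ℝ) * c ≤ r * c :=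
      mul_le_mul_of_nonneg_right (by exact_mod_cast not_lt.mp hr) hc
    have hur : u ≤ r * c := hKc.trans hKr
    have : u ≤ K * c / u * (r * c) := hur.trans (le_mul_of_one_le_left (hu.le.trans hur) hratio)
    linarith

theorem onlineCost_le_mul_offlineCost (hc : 0 ≤ c) (hu : 0 < u) (hKc : u ≤ K * c) (r : ℕ) :
    onlineCost c u K r ≤ (1 + K * c / u) * offlineCost c u r := by
  have hscaled : (1 + K * c / u) * u = K * c + u := by field_simp; ring
  rw [offlineCost, mul_min_of_nonneg _ _ (by positivity), hscaled]
  exact le_min (onlineCost_le_mul hc hu hKc r) (onlineCost_le_add hc hu.le r)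

end MemorylessReplication

theorem memoryless_competitive_general
    (C_ro C_up : ℝ) (K : ℕ)
    (hro : 0 < C_ro) (hup : 0 < C_up)
    (hKC : C_up ≤ (K : ℝ) * C_ro)
    (online offline : ℕ → ℝ)
    (honline : ∀ r : ℕ,
      online r = if r < K then (r : ℝ) * C_ro else (K : ℝ) * C_ro + C_up)
    (hoffline : ∀ r : ℕ, offline r = min ((r : ℝ) * C_ro) C_up) :
    ∀ r : ℕ, online r ≤ (1 + (K : ℝ) * C_ro / C_up) * offline r := by
  intro r
  rw [honline, hoffline]
  exact MemorylessReplication.onlineCost_le_mul_offlineCost hro.le hup hKC r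

theorem memoryless_competitive
    (C_ro C_up : ℝ) (K : ℕ)
    (hro : 0 < C_ro) (hup : 0 < C_up) (hK : 0 < K)
    (hKC : C_up ≤ (K : ℝ) * C_ro)
    (online offline : ℕ → ℝ)
    (honline : ∀ r : ℕ,
      online r = if r < K then (r : ℝ) * C_ro else (K : ℝ) * C_ro + C_up)
    (hoffline : ∀ r : ℕ, offline r = min ((r : ℝ) * C_ro) C_up) :
    ∀ r : ℕ, online r ≤ (1 + (K : ℝ) * C_ro / C_up) * offline r :=
  memoryless_competitive_general C_ro C_up K hro hup hKC online offline honline hoffline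
end

section
/- Let C_ro and C_up be positive real numbers and let K be a positive natural number with C_up = K · C_ro. Define online(r) = r · C_ro if r < K and online(r) = K · C_ro + C_up if r ≥ K, and define offline(r) = min(r · C_ro, C_up), for every natural number r. Then for every finite list rs of natural numbers (each entry representing a write followed by that many reads), the total online cost Σ_{r ∈ rs} online(r) is at most twice the total optimal offline cost Σ_{r ∈ rs} offline(r). -/
/-!
This is ski rental: within a phase, `r < K` says exactly that the accumulated rent `r * C_ro`
is below the purchase price `C_up = K * C_ro`. Then the online cost equals the optimum;
otherwise it is `K * C_ro + C_up = 2 * C_up` against an optimum of `C_up`. The bound on the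
whole workload is the sum of the per-phase bounds.
-/

theorem ite_lt_else_add_self_le_two_mul_min {α : Type*} [Semiring α] [LinearOrder α]
    [IsOrderedRing α] {a b : α} (ha : 0 ≤ a) :
    (if a < b then a else b + b) ≤ 2 * min a b := by
  split_ifs with hab
  · rw [min_eq_left hab.le, two_mul]
    exact le_add_of_nonneg_left ha
  · rw [min_eq_right (not_lt.mp hab), two_mul]

theorem memoryless_two_competitive_total_general
    (C_ro C_up : ℝ) (K : ℕ)
    (hro : 0 < C_ro)
    (hKC : C_up = (K : ℝ) * C_ro)
    (online offline : ℕ → ℝ)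
    (honline : ∀ r : ℕ,
      online r = if r < K then (r : ℝ) * C_ro else (K : ℝ) * C_ro + C_up)
    (hoffline : ∀ r : ℕ, offline r = min ((r : ℝ) * C_ro) C_up) :
    ∀ rs : List ℕ, (rs.map online).sum ≤ 2 * (rs.map offline).sum := by
  have phase_le (r : ℕ) : online r ≤ 2 * offline r := by
    have hrent : r < K ↔ (r : ℝ) * C_ro < C_up := by
      rw [hKC, mul_lt_mul_iff_of_pos_right hro, Nat.cast_lt]
    rw [honline, hoffline, ← hKC]
    simp only [hrent]
    exact ite_lt_else_add_self_le_two_mul_min (by positivity)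
  intro rs
  rw [← List.sum_map_mul_left]
  exact List.sum_le_sum fun r _ => phase_le r

theorem memoryless_two_competitive_total
    (C_ro C_up : ℝ) (K : ℕ)
    (hro : 0 < C_ro) (hup : 0 < C_up) (hK : 0 < K)
    (hKC : C_up = (K : ℝ) * C_ro)
    (online offline : ℕ → ℝ)
    (honline : ∀ r : ℕ,
      online r = if r < K then (r : ℝ) * C_ro else (K : ℝ) * C_ro + C_up)
    (hoffline : ∀ r : ℕ, offline r = min ((r : ℝ) * C_ro) C_up) :
    ∀ rs : List ℕ, (rs.map online).sum ≤ 2 * (rs.map offline).sum :=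
  memoryless_two_competitive_total_general C_ro C_up K hro hKC online offline honline hoffline
end

section
/- Let K' and D be real numbers with K' > 0 and D ≥ 0. Define the sequences A_1 = D, A_i = 2D + 1 for every i ≥ 2, and B_i = (2D + 1) / K' for every i ≥ 1. Then for every natural number i ≥ 1: (B_1 + … + B_{i−1}) · K' = (A_1 + … + A_i) − D ≤ (A_1 + … + A_i) − D, and (B_1 + … + B_i) · K' = (A_1 + … + A_i) + D + 1 > (A_1 + … + A_i) + D. Hence this sequence of sub-sequences makes the memorizing algorithm flip its replication decision in every sub-sequence. -/
open Finset

theorem sum_Icc_one_mul_eq_of_forall_eq_div {B : ℕ → ℝ} {K c : ℝ} (hK : K ≠ 0)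
    (hB : ∀ j, 1 ≤ j → B j = c / K) (n : ℕ) :
    (∑ j ∈ Icc 1 n, B j) * K = n * c := by
  rw [sum_congr rfl fun j hj => hB j (mem_Icc.mp hj).1, sum_const, Nat.card_Icc,
    Nat.add_sub_cancel, nsmul_eq_mul, mul_assoc, div_mul_cancel₀ c hK]

theorem sum_Icc_one_succ_eq_of_eq_of_forall_two_le {A : ℕ → ℝ} {a c : ℝ} (hA1 : A 1 = a)
    (hA : ∀ j, 2 ≤ j → A j = c) (n : ℕ) :
    ∑ j ∈ Icc 1 (n + 1), A j = a + n * c := by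
  induction n with
  | zero => simp [hA1]
  | succ n ih =>
    rw [sum_Icc_succ_top (by omega), ih, hA (n + 2) (by omega)]
    push_cast
    ring

theorem memorizing_worstcase_sequence_flips_general
    (K' D : ℝ) (hK' : 0 < K')
    (A B : ℕ → ℝ)
    (hA1 : A 1 = D)
    (hA : ∀ i : ℕ, 2 ≤ i → A i = 2 * D + 1)
    (hB : ∀ i : ℕ, 1 ≤ i → B i = (2 * D + 1) / K') :
    ∀ i : ℕ, 1 ≤ i →
      ((∑ j ∈ Finset.Icc 1 (i - 1), B j) * K' = (∑ j ∈ Finset.Icc 1 i, A j) - D) ∧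
      ((∑ j ∈ Finset.Icc 1 i, B j) * K' = (∑ j ∈ Finset.Icc 1 i, A j) + D + 1) ∧
      ((∑ j ∈ Finset.Icc 1 i, B j) * K' > (∑ j ∈ Finset.Icc 1 i, A j) + D) := by
  intro i hi
  obtain ⟨n, rfl⟩ := Nat.exists_eq_add_of_le' hi
  have hB_sum := sum_Icc_one_mul_eq_of_forall_eq_div hK'.ne' hB
  rw [Nat.add_sub_cancel, hB_sum, hB_sum, sum_Icc_one_succ_eq_of_eq_of_forall_two_le hA1 hA n]
  push_cast
  exact ⟨by ring, by ring, by linarith⟩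

theorem memorizing_worstcase_sequence_flips
    (K' D : ℝ) (hK' : 0 < K') (hD : 0 ≤ D)
    (A B : ℕ → ℝ)
    (hA1 : A 1 = D)
    (hA : ∀ i : ℕ, 2 ≤ i → A i = 2 * D + 1)
    (hB : ∀ i : ℕ, 1 ≤ i → B i = (2 * D + 1) / K') :
    ∀ i : ℕ, 1 ≤ i →
      ((∑ j ∈ Finset.Icc 1 (i - 1), B j) * K' = (∑ j ∈ Finset.Icc 1 i, A j) - D) ∧
      ((∑ j ∈ Finset.Icc 1 i, B j) * K' = (∑ j ∈ Finset.Icc 1 i, A j) + D + 1) ∧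
      ((∑ j ∈ Finset.Icc 1 i, B j) * K' > (∑ j ∈ Finset.Icc 1 i, A j) + D) :=
  memorizing_worstcase_sequence_flips_general K' D hK' A B hA1 hA hB
end

section
/- Let K', D, C_ro, C_up be real numbers with K' > 0, D ≥ 0, C_up > 0, and C_ro = C_up / K'. Define A_1 = D, A_i = 2D + 1 for i ≥ 2, and B_i = (2D + 1) / K' for i ≥ 1. Then for every natural number n ≥ 1, the total online cost over the first n sub-sequences, Σ_{i=1}^{n} (A_i · C_ro + B_i · C_up), equals (n · (4D + 2) − (D + 1)) · C_up / K', and in particular is at most ((4D + 2) / K') times the total offline cost n · C_up. -/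
/-! The first sub-sequence costs `(3D + 1)·C_up/K'` and each later one `(4D + 2)·C_up/K'`, so the
total falls short of `n·(4D + 2)·C_up/K'` by exactly `(D + 1)·C_up/K' ≥ 0`. -/

open Finset

theorem sum_Icc_one_eq_add_nsmul {M : Type*} [AddCommMonoid M] {f : ℕ → M} {c : M}
    (hf : ∀ i, 2 ≤ i → f i = c) {n : ℕ} (hn : 1 ≤ n) :
    ∑ i ∈ Icc 1 n, f i = f 1 + (n - 1) • c := by
  have hsplit : Icc 1 n = insert 1 (Icc 2 n) := by
    ext i
    simp only [mem_insert, mem_Icc]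
    omega
  rw [hsplit, sum_insert (by simp), sum_congr rfl fun i hi => hf i (mem_Icc.mp hi).1,
    sum_const, Nat.card_Icc]
  rfl

theorem memorizing_total_cost
    (K' D C_ro C_up : ℝ)
    (hK' : 0 < K') (hD : 0 ≤ D) (hup : 0 < C_up)
    (hro : C_ro = C_up / K')
    (A B : ℕ → ℝ)
    (hA1 : A 1 = D)
    (hA : ∀ i : ℕ, 2 ≤ i → A i = 2 * D + 1)
    (hB : ∀ i : ℕ, 1 ≤ i → B i = (2 * D + 1) / K') :
    ∀ n : ℕ, 1 ≤ n →
      ((∑ i ∈ Finset.Icc 1 n, (A i * C_ro + B i * C_up))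
          = ((n : ℝ) * (4 * D + 2) - (D + 1)) * C_up / K') ∧
      ((∑ i ∈ Finset.Icc 1 n, (A i * C_ro + B i * C_up))
          ≤ ((4 * D + 2) / K') * ((n : ℝ) * C_up)) := by
  intro n hn
  have hfirst : A 1 * C_ro + B 1 * C_up = (3 * D + 1) * C_up / K' := by
    rw [hA1, hB 1 le_rfl, hro]
    ring
  have hlater : ∀ i, 2 ≤ i → A i * C_ro + B i * C_up = (4 * D + 2) * C_up / K' := by
    intro i hi
    rw [hA i hi, hB i (by omega), hro]
    ring
  have htotal : ∑ i ∈ Icc 1 n, (A i * C_ro + B i * C_up)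
      = ((n : ℝ) * (4 * D + 2) - (D + 1)) * C_up / K' := by
    rw [sum_Icc_one_eq_add_nsmul hlater hn, hfirst, nsmul_eq_mul, Nat.cast_sub hn]
    push_cast
    ring
  refine ⟨htotal, ?_⟩
  calc ∑ i ∈ Icc 1 n, (A i * C_ro + B i * C_up)
      = ((n : ℝ) * (4 * D + 2) - (D + 1)) * C_up / K' := htotal
    _ ≤ (n : ℝ) * (4 * D + 2) * C_up / K' := by gcongr; linarith
    _ = (4 * D + 2) / K' * ((n : ℝ) * C_up) := by ring
end
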